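/- arXiv:1204.5334 — 9 statements merged into one kernel-verified Lean document; each statement's English description precedes it below -/
import Mathlib

section
/- Let a₁,b₁,c₁,a₂,b₂,c₂ be nonnegative reals with a₁+b₁+c₁=1 and a₂+b₂+c₂=1. If a₁ ≥ c₁ and a₂ ≥ c₂, then (a₁a₂ + a₁b₂ + a₂b₁) - (c₁c₂ + c₁b₂ + c₂b₁) ≥ ((a₁-c₁)+(a₂-c₂))/2. -/
/-! With votes `Xᵢ ∈ {1, 0, -1}` drawn with probabilities `aᵢ, bᵢ, cᵢ`, the left-hand side is
`E[sign (X₁ + X₂)]` and the right-hand side is `E[(X₁ + X₂) / 2]`. The two integrands differ only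
when exactly one agent abstains, so the gap is `(b₂ (a₁ - c₁) + b₁ (a₂ - c₂)) / 2 ≥ 0`. -/

theorem two_mul_majority_sub_sum_eq {R : Type*} [CommRing R] {a₁ b₁ c₁ a₂ b₂ c₂ : R}
    (h1 : a₁ + b₁ + c₁ = 1) (h2 : a₂ + b₂ + c₂ = 1) :
    2 * ((a₁ * a₂ + a₁ * b₂ + a₂ * b₁) - (c₁ * c₂ + c₁ * b₂ + c₂ * b₁))
        - ((a₁ - c₁) + (a₂ - c₂)) =
      b₂ * (a₁ - c₁) + b₁ * (a₂ - c₂) := by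
  linear_combination (a₂ - c₂) * h1 + (a₁ - c₁) * h2

theorem stmt_2_general (a₁ b₁ c₁ a₂ b₂ c₂ : ℝ)
    (hb₁ : 0 ≤ b₁) (hb₂ : 0 ≤ b₂)
    (h1 : a₁ + b₁ + c₁ = 1) (h2 : a₂ + b₂ + c₂ = 1)
    (hac₁ : a₁ ≥ c₁) (hac₂ : a₂ ≥ c₂) :
    (a₁ * a₂ + a₁ * b₂ + a₂ * b₁) - (c₁ * c₂ + c₁ * b₂ + c₂ * b₁) ≥
      ((a₁ - c₁) + (a₂ - c₂)) / 2 := by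
  have gap_nonneg : 0 ≤ b₂ * (a₁ - c₁) + b₁ * (a₂ - c₂) :=
    add_nonneg (mul_nonneg hb₂ (sub_nonneg.2 hac₁)) (mul_nonneg hb₁ (sub_nonneg.2 hac₂))
  linarith [two_mul_majority_sub_sum_eq h1 h2]

theorem stmt_2 (a₁ b₁ c₁ a₂ b₂ c₂ : ℝ)
    (ha₁ : 0 ≤ a₁) (hb₁ : 0 ≤ b₁) (hc₁ : 0 ≤ c₁)
    (ha₂ : 0 ≤ a₂) (hb₂ : 0 ≤ b₂) (hc₂ : 0 ≤ c₂)
    (h1 : a₁ + b₁ + c₁ = 1) (h2 : a₂ + b₂ + c₂ = 1)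
    (hac₁ : a₁ ≥ c₁) (hac₂ : a₂ ≥ c₂) :
    (a₁ * a₂ + a₁ * b₂ + a₂ * b₁) - (c₁ * c₂ + c₁ * b₂ + c₂ * b₁) ≥
      ((a₁ - c₁) + (a₂ - c₂)) / 2 :=
  stmt_2_general a₁ b₁ c₁ a₂ b₂ c₂ hb₁ hb₂ h1 h2 hac₁ hac₂
end

section
/- Under the setup of the dependent case (a,b,c ≥ 0 summing to 1, row-stochastic conditionals P_{xY}, induced marginals A,B,C, and B > 0 with Q_{Ba} = aP_{aB}/B, Q_{Bc} = cP_{cB}/B), if P_{bA} ≥ P_{bC} and Q_{Ba} ≥ Q_{Bc}, then (aP_{aA}+aP_{aB}+bP_{bA}) − (cP_{cC}+cP_{cB}+bP_{bC}) ≥ ((a−c)+(A−C))/2. -/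
/-! Using the row sums of the conditionals for `a` and `c`, twice the gap between the collective
payoff and the average of the individual payoffs is `(a P_{aB} - c P_{cB}) + b (P_{bA} - P_{bC})`.
The first term is `B (Q_{Ba} - Q_{Bc}) ≥ 0`, the second is nonnegative since `b ≥ 0`. -/

lemma collective_sub_average_eq (a b c PaA PaB PaC PbA PbC PcA PcB PcC : ℝ)
    (hra : PaA + PaB + PaC = 1) (hrc : PcA + PcB + PcC = 1) :
    (a * PaA + a * PaB + b * PbA) - (c * PcC + c * PcB + b * PbC) -
        ((a - c) + ((a * PaA + b * PbA + c * PcA) - (a * PaC + b * PbC + c * PcC))) / 2 =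
      ((a * PaB - c * PcB) + b * (PbA - PbC)) / 2 := by
  linear_combination (a / 2) * hra - (c / 2) * hrc

theorem stmt_7_general (a b c : ℝ)
    (PaA PaB PaC PbA PbC PcA PcB PcC : ℝ)
    (hb : 0 ≤ b)
    (hra : PaA + PaB + PaC = 1)
    (hrc : PcA + PcB + PcC = 1)
    (A : ℝ) (hA : A = a * PaA + b * PbA + c * PcA)
    (B : ℝ)
    (C : ℝ) (hC : C = a * PaC + b * PbC + c * PcC)
    (hBpos : B > 0)
    (QBa QBc : ℝ) (hQBa : QBa = a * PaB / B) (hQBc : QBc = c * PcB / B)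
    (h1 : PbA ≥ PbC) (h2 : QBa ≥ QBc) :
    (a * PaA + a * PaB + b * PbA) - (c * PcC + c * PcB + b * PbC) ≥
      ((a - c) + (A - C)) / 2 := by
  have hnum : c * PcB ≤ a * PaB := by
    rw [hQBa, hQBc] at h2
    exact (div_le_div_iff_of_pos_right hBpos).1 h2
  have hbterm : 0 ≤ b * (PbA - PbC) := mul_nonneg hb (sub_nonneg.2 h1)
  subst hA hC
  linarith [collective_sub_average_eq a b c PaA PaB PaC PbA PbC PcA PcB PcC hra hrc]

theorem stmt_7 (a b c : ℝ)
    (PaA PaB PaC PbA PbB PbC PcA PcB PcC : ℝ)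
    (ha : 0 ≤ a) (hb : 0 ≤ b) (hc : 0 ≤ c) (habc : a + b + c = 1)
    (hPaA : 0 ≤ PaA) (hPaB : 0 ≤ PaB) (hPaC : 0 ≤ PaC)
    (hPbA : 0 ≤ PbA) (hPbB : 0 ≤ PbB) (hPbC : 0 ≤ PbC)
    (hPcA : 0 ≤ PcA) (hPcB : 0 ≤ PcB) (hPcC : 0 ≤ PcC)
    (hra : PaA + PaB + PaC = 1) (hrb : PbA + PbB + PbC = 1)
    (hrc : PcA + PcB + PcC = 1)
    (A : ℝ) (hA : A = a * PaA + b * PbA + c * PcA)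
    (B : ℝ) (hB : B = a * PaB + b * PbB + c * PcB)
    (C : ℝ) (hC : C = a * PaC + b * PbC + c * PcC)
    (hBpos : B > 0)
    (QBa QBc : ℝ) (hQBa : QBa = a * PaB / B) (hQBc : QBc = c * PcB / B)
    (h1 : PbA ≥ PbC) (h2 : QBa ≥ QBc) :
    (a * PaA + a * PaB + b * PbA) - (c * PcC + c * PcB + b * PbC) ≥
      ((a - c) + (A - C)) / 2 :=
  stmt_7_general a b c PaA PaB PaC PbA PbC PcA PcB PcC hb hra hrc A hA B C hC hBpos QBa QBc hQBa
    hQBc h1 h2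
end

section
/- Under the setup of the dependent case (a,b,c ≥ 0 with a+b+c=1, row-stochastic conditionals P_{xY}, induced marginals A,B,C), if b = 0 and B = 0, then (aP_{aA}+aP_{aB}+bP_{bA}) − (cP_{cC}+cP_{cB}+bP_{bC}) = ((a−c)+(A−C))/2. -/
theorem stmt_8_general (a b c : ℝ)
    (PaA PaB PaC PbA PbB PbC PcA PcB PcC : ℝ)
    (ha : 0 ≤ a) (hc : 0 ≤ c)
    (hPaB : 0 ≤ PaB) (hPcB : 0 ≤ PcB)
    (hra : PaA + PaB + PaC = 1)
    (hrc : PcA + PcB + PcC = 1)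
    (A : ℝ) (hA : A = a * PaA + b * PbA + c * PcA)
    (B : ℝ) (hB : B = a * PaB + b * PbB + c * PcB)
    (C : ℝ) (hC : C = a * PaC + b * PbC + c * PcC)
    (hb0 : b = 0) (hB0 : B = 0) :
    (a * PaA + a * PaB + b * PbA) - (c * PcC + c * PcB + b * PbC) =
      ((a - c) + (A - C)) / 2 := by
  subst hb0 hA hC
  have hneutral : a * PaB + c * PcB = 0 := by linear_combination hB0 - hB
  obtain ⟨haB, hcB⟩ :=
    (add_eq_zero_iff_of_nonneg (mul_nonneg ha hPaB) (mul_nonneg hc hPcB)).1 hneutral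
  -- with the neutral terms gone, the row sums read a = a PaA + a PaC and c = c PcA + c PcC
  linear_combination (a / 2) * hra - (c / 2) * hrc + haB / 2 - hcB / 2

theorem stmt_8 (a b c : ℝ)
    (PaA PaB PaC PbA PbB PbC PcA PcB PcC : ℝ)
    (ha : 0 ≤ a) (hb : 0 ≤ b) (hc : 0 ≤ c) (habc : a + b + c = 1)
    (hPaA : 0 ≤ PaA) (hPaB : 0 ≤ PaB) (hPaC : 0 ≤ PaC)
    (hPbA : 0 ≤ PbA) (hPbB : 0 ≤ PbB) (hPbC : 0 ≤ PbC)
    (hPcA : 0 ≤ PcA) (hPcB : 0 ≤ PcB) (hPcC : 0 ≤ PcC)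
    (hra : PaA + PaB + PaC = 1) (hrb : PbA + PbB + PbC = 1)
    (hrc : PcA + PcB + PcC = 1)
    (A : ℝ) (hA : A = a * PaA + b * PbA + c * PcA)
    (B : ℝ) (hB : B = a * PaB + b * PbB + c * PcB)
    (C : ℝ) (hC : C = a * PaC + b * PbC + c * PcC)
    (hb0 : b = 0) (hB0 : B = 0) :
    (a * PaA + a * PaB + b * PbA) - (c * PcC + c * PcB + b * PbC) =
      ((a - c) + (A - C)) / 2 :=
  stmt_8_general a b c PaA PaB PaC PbA PbB PbC PcA PcB PcC ha hc hPaB hPcB hra hrc A hA B hB C hC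
    hb0 hB0
end

section
/- Let Ω be a finite probability space and let h₁, h₂ : Ω → {−1, 0, 1} be independent random variables (representing sign(hᵢ(G) − hᵢ(B))). Define the collective sign s = sign of (h₁ + h₂), and V(X) = P(X = 1) − P(X = −1) for any {−1,0,1}-valued X. If V(h₁) ≥ 0 and V(h₂) ≥ 0, then V(s) ≥ (V(h₁) + V(h₂))/2. -/
open scoped Classical

/-- Probability of an event on a finite probability space given by weights `p`. -/
noncomputable def Pr {Ω : Type*} [Fintype Ω] (p : Ω → ℝ) (E : Ω → Prop) : ℝ :=
  ∑ ω, if E ω then p ω else 0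

/-- Expected payoff of a `{-1,0,1}`-valued random variable under payoffs (+1,0,-1). -/
noncomputable def V {Ω : Type*} [Fintype Ω] (p : Ω → ℝ) (X : Ω → ℤ) : ℝ :=
  Pr p (fun ω => X ω = 1) - Pr p (fun ω => X ω = -1)

/-!
Writing `Vᵢ = V hᵢ` and `zᵢ = P(hᵢ = 0)`, independence lets one expand both tails of the collective
sign over the nine value pairs, and total probability collapses the result to the exact identity
`V s = V₁ (1 + z₂) / 2 + V₂ (1 + z₁) / 2`: when the other agent abstains, an agent's vote decides
alone. Both correction terms `V₁ z₂ / 2` and `V₂ z₁ / 2` are nonnegative once `V₁, V₂ ≥ 0`.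
-/

section

variable {Ω : Type*} [Fintype Ω] {p : Ω → ℝ}

theorem Pr_nonneg (hp : ∀ ω, 0 ≤ p ω) (E : Ω → Prop) : 0 ≤ Pr p E :=
  Finset.sum_nonneg fun ω _ => by split_ifs <;> simp [hp ω]

theorem Pr_comp_eq_sum {α : Type*} (f : Ω → α) (S : Finset α) (hf : ∀ ω, f ω ∈ S)
    (Q : α → Prop) :
    Pr p (fun ω => Q (f ω)) = ∑ x ∈ S, if Q x then Pr p (fun ω => f ω = x) else 0 := by
  calc Pr p (fun ω => Q (f ω))
      = ∑ ω, ∑ x ∈ S, if f ω = x then (if Q x then p ω else 0) else 0 := by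
        refine Finset.sum_congr rfl fun ω _ => ?_
        rw [Finset.sum_ite_eq S (f ω), if_pos (hf ω)]
    _ = _ := by
        rw [Finset.sum_comm]
        refine Finset.sum_congr rfl fun x _ => ?_
        split_ifs <;> simp [Pr]

theorem sum_Pr_eq_one (hsum : ∑ ω, p ω = 1) {α : Type*} (f : Ω → α) (S : Finset α)
    (hf : ∀ ω, f ω ∈ S) : ∑ x ∈ S, Pr p (fun ω => f ω = x) = 1 := by
  simpa [Pr, hsum] using (Pr_comp_eq_sum (p := p) f S hf (fun _ => True)).symm

theorem Pr_pair_eq_sum_of_indep {α β : Type*} {h₁ : Ω → α} {h₂ : Ω → β}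
    (S₁ : Finset α) (S₂ : Finset β) (hS₁ : ∀ ω, h₁ ω ∈ S₁) (hS₂ : ∀ ω, h₂ ω ∈ S₂)
    (indep : ∀ x y, Pr p (fun ω => h₁ ω = x ∧ h₂ ω = y) =
      Pr p (fun ω => h₁ ω = x) * Pr p (fun ω => h₂ ω = y))
    (Q : α → β → Prop) :
    Pr p (fun ω => Q (h₁ ω) (h₂ ω)) = ∑ x ∈ S₁, ∑ y ∈ S₂,
      if Q x y then Pr p (fun ω => h₁ ω = x) * Pr p (fun ω => h₂ ω = y) else 0 := by
  rw [Pr_comp_eq_sum (fun ω => (h₁ ω, h₂ ω)) (S₁ ×ˢ S₂)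
    (fun ω => Finset.mem_product.2 ⟨hS₁ ω, hS₂ ω⟩) (fun z => Q z.1 z.2), Finset.sum_product]
  simp only [Prod.ext_iff, indep]

theorem V_sign_add {h₁ h₂ : Ω → ℤ} (hsum : ∑ ω, p ω = 1)
    (hr₁ : ∀ ω, h₁ ω ∈ ({-1, 0, 1} : Finset ℤ)) (hr₂ : ∀ ω, h₂ ω ∈ ({-1, 0, 1} : Finset ℤ))
    (indep : ∀ x y, Pr p (fun ω => h₁ ω = x ∧ h₂ ω = y) =
      Pr p (fun ω => h₁ ω = x) * Pr p (fun ω => h₂ ω = y)) :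
    V p (fun ω => (h₁ ω + h₂ ω).sign) =
      V p h₁ * (1 + Pr p (fun ω => h₂ ω = 0)) / 2 +
      V p h₂ * (1 + Pr p (fun ω => h₁ ω = 0)) / 2 := by
  have total₁ := sum_Pr_eq_one hsum h₁ _ hr₁
  have total₂ := sum_Pr_eq_one hsum h₂ _ hr₂
  simp only [V, Pr_pair_eq_sum_of_indep _ _ hr₁ hr₂ indep (fun x y => (x + y).sign = 1),
    Pr_pair_eq_sum_of_indep _ _ hr₁ hr₂ indep (fun x y => (x + y).sign = -1)]
  simp +decide only [Finset.sum_insert, Finset.mem_insert, Finset.mem_singleton,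
    Finset.sum_singleton, if_true, if_false] at total₁ total₂ ⊢
  set a₁ := Pr p (fun ω => h₁ ω = 1)
  set b₁ := Pr p (fun ω => h₁ ω = -1)
  set a₂ := Pr p (fun ω => h₂ ω = 1)
  set b₂ := Pr p (fun ω => h₂ ω = -1)
  linear_combination (a₁ - b₁) / 2 * total₂ + (a₂ - b₂) / 2 * total₁

end

theorem stmt_11 {Ω : Type*} [Fintype Ω] (p : Ω → ℝ)
    (hp : ∀ ω, 0 ≤ p ω) (hsum : ∑ ω, p ω = 1)
    (h₁ h₂ : Ω → ℤ)
    (hr₁ : ∀ ω, h₁ ω = -1 ∨ h₁ ω = 0 ∨ h₁ ω = 1)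
    (hr₂ : ∀ ω, h₂ ω = -1 ∨ h₂ ω = 0 ∨ h₂ ω = 1)
    (indep : ∀ x y : ℤ, Pr p (fun ω => h₁ ω = x ∧ h₂ ω = y) =
      Pr p (fun ω => h₁ ω = x) * Pr p (fun ω => h₂ ω = y))
    (hV₁ : V p h₁ ≥ 0) (hV₂ : V p h₂ ≥ 0) :
    V p (fun ω => (h₁ ω + h₂ ω).sign) ≥ (V p h₁ + V p h₂) / 2 := by
  have mem_signs : ∀ h : Ω → ℤ, (∀ ω, h ω = -1 ∨ h ω = 0 ∨ h ω = 1) →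
      ∀ ω, h ω ∈ ({-1, 0, 1} : Finset ℤ) := fun h hr ω => by simpa using hr ω
  rw [V_sign_add hsum (mem_signs h₁ hr₁) (mem_signs h₂ hr₂) indep]
  linarith [mul_nonneg hV₁ (Pr_nonneg hp fun ω => h₂ ω = 0),
    mul_nonneg hV₂ (Pr_nonneg hp fun ω => h₁ ω = 0)]
end

section
/- Let Ω be a finite probability space and h₁, h₂ : Ω → {−1, 0, 1} independent random variables with P(h₁ = 0) = 0 and P(h₂ = 0) = 0. Let s = sign(h₁ + h₂) and V(X) = P(X = 1) − P(X = −1). Then V(s) = (V(h₁) + V(h₂))/2. -/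
open scoped Classical

/-!
Outside a null set both opinions are `±1`, and then `sign (h₁ + h₂) = s` for `s = ±1` exactly
when `h₁ = h₂ = s`. Writing `aᵢ = P(hᵢ = 1)` and `bᵢ = P(hᵢ = -1) = 1 - aᵢ`, independence gives
`V(s) = a₁ a₂ - b₁ b₂ = ((a₁ - b₁)(a₂ + b₂) + (a₁ + b₁)(a₂ - b₂)) / 2 = (V(h₁) + V(h₂)) / 2`.
-/

lemma Int.sign_add_eq_iff_of_eq_one_or_eq_neg_one {x y s : ℤ} (hx : x = 1 ∨ x = -1)
    (hy : y = 1 ∨ y = -1) (hs : s = 1 ∨ s = -1) : (x + y).sign = s ↔ x = s ∧ y = s := by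
  rcases hx with rfl | rfl <;> rcases hy with rfl | rfl <;> rcases hs with rfl | rfl <;> decide

section Pr

variable {Ω : Type*} [Fintype Ω] (p : Ω → ℝ)

lemma Pr_true : Pr p (fun _ => True) = ∑ ω, p ω := by
  simp only [Pr, if_true]

lemma Pr_or_of_disjoint {E F : Ω → Prop} (hEF : ∀ ω, ¬(E ω ∧ F ω)) :
    Pr p (fun ω => E ω ∨ F ω) = Pr p E + Pr p F := by
  rw [Pr, Pr, Pr, ← Finset.sum_add_distrib]
  refine Finset.sum_congr rfl fun ω _ => ?_
  by_cases hE : E ω <;> by_cases hF : F ω <;> simp_all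

variable {p}

lemma Pr_congr_of_pos (hp : ∀ ω, 0 ≤ p ω) {E F : Ω → Prop}
    (hEF : ∀ ω, 0 < p ω → (E ω ↔ F ω)) : Pr p E = Pr p F := by
  refine Finset.sum_congr rfl fun ω _ => ?_
  rcases (hp ω).lt_or_eq with hpos | hzero
  · simp only [hEF ω hpos]
  · simp only [← hzero, ite_self]

lemma not_of_Pr_eq_zero (hp : ∀ ω, 0 ≤ p ω) {E : Ω → Prop} (hE : Pr p E = 0) {ω : Ω}
    (hω : 0 < p ω) : ¬E ω := by
  intro hEω
  have hnonneg : ∀ i ∈ Finset.univ, 0 ≤ if E i then p i else 0 := fun i _ => by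
    split_ifs
    exacts [hp i, le_rfl]
  have := (Finset.sum_eq_zero_iff_of_nonneg hnonneg).mp hE ω (Finset.mem_univ ω)
  rw [if_pos hEω] at this
  exact hω.ne' this

lemma eq_one_or_eq_neg_one_of_Pr_eq_zero (hp : ∀ ω, 0 ≤ p ω) {X : Ω → ℤ}
    (hX : ∀ ω, X ω = -1 ∨ X ω = 0 ∨ X ω = 1) (hX₀ : Pr p (fun ω => X ω = 0) = 0) :
    ∀ ω, 0 < p ω → X ω = 1 ∨ X ω = -1 := by
  intro ω hω
  have := not_of_Pr_eq_zero hp hX₀ hω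
  have := hX ω
  omega

lemma Pr_eq_one_add_Pr_eq_neg_one (hp : ∀ ω, 0 ≤ p ω) (hsum : ∑ ω, p ω = 1) {X : Ω → ℤ}
    (hX : ∀ ω, 0 < p ω → X ω = 1 ∨ X ω = -1) :
    Pr p (fun ω => X ω = 1) + Pr p (fun ω => X ω = -1) = 1 := by
  rw [← Pr_or_of_disjoint p fun ω h => by omega, ← hsum, ← Pr_true]
  exact Pr_congr_of_pos hp fun ω hω => iff_true_intro (hX ω hω)

lemma Pr_sign_add_eq (hp : ∀ ω, 0 ≤ p ω) {X Y : Ω → ℤ}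
    (hX : ∀ ω, 0 < p ω → X ω = 1 ∨ X ω = -1) (hY : ∀ ω, 0 < p ω → Y ω = 1 ∨ Y ω = -1)
    {s : ℤ} (hs : s = 1 ∨ s = -1) :
    Pr p (fun ω => (X ω + Y ω).sign = s) = Pr p (fun ω => X ω = s ∧ Y ω = s) :=
  Pr_congr_of_pos hp fun ω hω =>
    Int.sign_add_eq_iff_of_eq_one_or_eq_neg_one (hX ω hω) (hY ω hω) hs

end Pr

theorem stmt_12 {Ω : Type*} [Fintype Ω] (p : Ω → ℝ)
    (hp : ∀ ω, 0 ≤ p ω) (hsum : ∑ ω, p ω = 1)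
    (h₁ h₂ : Ω → ℤ)
    (hr₁ : ∀ ω, h₁ ω = -1 ∨ h₁ ω = 0 ∨ h₁ ω = 1)
    (hr₂ : ∀ ω, h₂ ω = -1 ∨ h₂ ω = 0 ∨ h₂ ω = 1)
    (indep : ∀ x y : ℤ, Pr p (fun ω => h₁ ω = x ∧ h₂ ω = y) =
      Pr p (fun ω => h₁ ω = x) * Pr p (fun ω => h₂ ω = y))
    (hz₁ : Pr p (fun ω => h₁ ω = 0) = 0)
    (hz₂ : Pr p (fun ω => h₂ ω = 0) = 0) :
    V p (fun ω => (h₁ ω + h₂ ω).sign) = (V p h₁ + V p h₂) / 2 := by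
  have hpm₁ := eq_one_or_eq_neg_one_of_Pr_eq_zero hp hr₁ hz₁
  have hpm₂ := eq_one_or_eq_neg_one_of_Pr_eq_zero hp hr₂ hz₂
  have htot₁ := Pr_eq_one_add_Pr_eq_neg_one hp hsum hpm₁
  have htot₂ := Pr_eq_one_add_Pr_eq_neg_one hp hsum hpm₂
  rw [V, V, V, Pr_sign_add_eq hp hpm₁ hpm₂ (.inl rfl), Pr_sign_add_eq hp hpm₁ hpm₂ (.inr rfl),
    indep, indep]
  linear_combination
    (Pr p (fun ω => h₁ ω = 1) - Pr p (fun ω => h₁ ω = -1)) / 2 * htot₂ +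
    (Pr p (fun ω => h₂ ω = 1) - Pr p (fun ω => h₂ ω = -1)) / 2 * htot₁
end

section
/- Let Ω be a finite probability space and h₁, h₂ : Ω → {−1, 0, 1} random variables (not necessarily independent) with P(h₁ = 0) = 0 and P(h₂ = 0) = 0. Let s = sign(h₁ + h₂) and V(X) = P(X = 1) − P(X = −1). Then V(s) = (V(h₁) + V(h₂))/2. -/
open scoped Classical

/-! With both opinions in `{-1, 1}` almost surely, `sign (h₁ + h₂)` equals `(h₁ + h₂) / 2`
pointwise off a null set; since `V` is the expectation of a `{-1, 0, 1}`-valued variable,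
linearity of expectation gives the claim. -/

section

variable {Ω : Type*} [Fintype Ω] (p : Ω → ℝ)

theorem Pr_eq_zero_iff (hp : ∀ ω, 0 ≤ p ω) (E : Ω → Prop) :
    Pr p E = 0 ↔ ∀ ω, E ω → p ω = 0 := by
  rw [Pr, Finset.sum_eq_zero_iff_of_nonneg fun ω _ => ite_nonneg (hp ω) le_rfl]
  simp only [Finset.mem_univ, ite_eq_right_iff, true_implies]

theorem V_eq_sum_mul {X : Ω → ℤ} (hX : ∀ ω, X ω = -1 ∨ X ω = 0 ∨ X ω = 1) :
    V p X = ∑ ω, p ω * X ω := by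
  rw [V, Pr, Pr, ← Finset.sum_sub_distrib]
  refine Finset.sum_congr rfl fun ω _ => ?_
  rcases hX ω with h | h | h <;> simp [h]

theorem eq_neg_one_or_eq_one_of_Pr_eq_zero (hp : ∀ ω, 0 ≤ p ω) {X : Ω → ℤ}
    (hX : ∀ ω, X ω = -1 ∨ X ω = 0 ∨ X ω = 1) (hz : Pr p (fun ω => X ω = 0) = 0) {ω : Ω}
    (hω : p ω ≠ 0) : X ω = -1 ∨ X ω = 1 := by
  have := mt ((Pr_eq_zero_iff p hp _).mp hz ω) hω
  rcases hX ω with h | h | h <;> tauto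

end

theorem Int.two_mul_sign_add {a b : ℤ} (ha : a = -1 ∨ a = 1) (hb : b = -1 ∨ b = 1) :
    2 * (a + b).sign = a + b := by
  rcases ha with rfl | rfl <;> rcases hb with rfl | rfl <;> decide

theorem stmt_13_general {Ω : Type*} [Fintype Ω] (p : Ω → ℝ)
    (hp : ∀ ω, 0 ≤ p ω)
    (h₁ h₂ : Ω → ℤ)
    (hr₁ : ∀ ω, h₁ ω = -1 ∨ h₁ ω = 0 ∨ h₁ ω = 1)
    (hr₂ : ∀ ω, h₂ ω = -1 ∨ h₂ ω = 0 ∨ h₂ ω = 1)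
    (hz₁ : Pr p (fun ω => h₁ ω = 0) = 0)
    (hz₂ : Pr p (fun ω => h₂ ω = 0) = 0) :
    V p (fun ω => (h₁ ω + h₂ ω).sign) = (V p h₁ + V p h₂) / 2 := by
  have hs : ∀ ω, (h₁ ω + h₂ ω).sign = -1 ∨ (h₁ ω + h₂ ω).sign = 0 ∨ (h₁ ω + h₂ ω).sign = 1 :=
    fun ω => by rcases Int.sign_trichotomy (h₁ ω + h₂ ω) with h | h | h <;> simp [h]
  rw [V_eq_sum_mul p hs, V_eq_sum_mul p hr₁, V_eq_sum_mul p hr₂, ← Finset.sum_add_distrib,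
    Finset.sum_div]
  refine Finset.sum_congr rfl fun ω _ => ?_
  by_cases hpω : p ω = 0
  · simp [hpω]
  have hmid := congrArg (fun n : ℤ => (n : ℝ)) <| Int.two_mul_sign_add
    (eq_neg_one_or_eq_one_of_Pr_eq_zero p hp hr₁ hz₁ hpω)
    (eq_neg_one_or_eq_one_of_Pr_eq_zero p hp hr₂ hz₂ hpω)
  push_cast at hmid
  linear_combination p ω / 2 * hmid

theorem stmt_13 {Ω : Type*} [Fintype Ω] (p : Ω → ℝ)
    (hp : ∀ ω, 0 ≤ p ω) (hsum : ∑ ω, p ω = 1)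
    (h₁ h₂ : Ω → ℤ)
    (hr₁ : ∀ ω, h₁ ω = -1 ∨ h₁ ω = 0 ∨ h₁ ω = 1)
    (hr₂ : ∀ ω, h₂ ω = -1 ∨ h₂ ω = 0 ∨ h₂ ω = 1)
    (hz₁ : Pr p (fun ω => h₁ ω = 0) = 0)
    (hz₂ : Pr p (fun ω => h₂ ω = 0) = 0) :
    V p (fun ω => (h₁ ω + h₂ ω).sign) = (V p h₁ + V p h₂) / 2 :=
  stmt_13_general p hp h₁ h₂ hr₁ hr₂ hz₁ hz₂
end

section
/- Let Ω be a finite probability space and h₁, h₂ : Ω → {−1, 0, 1} random variables with s = sign(h₁ + h₂) and V(X) = P(X = 1) − P(X = −1). Then V(s) ≥ (V(h₁)+V(h₂))/2 if and only if P(h₁ = 0 ∧ h₂ = 1) + P(h₂ = 0 ∧ h₁ = 1) ≥ P(h₁ = 0 ∧ h₂ = −1) + P(h₂ = 0 ∧ h₁ = −1). -/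
open scoped Classical

/-!
With `payoff x = [x = 1] - [x = -1]`, the quantity `2 payoff (sign (a + b)) - payoff a - payoff b`
vanishes when the two agents agree or cancel, and equals the other agent's payoff when exactly
one of them is neutral. Summing this pointwise identity against `p` turns `2 V(s) - V(h₁) - V(h₂)`
into the difference of the two sides of the criterion.
-/

-- Going through `ind` keeps the classical `Decidable` instance that `Pr` uses, so the pointwise
-- identity below matches the summands of `Pr` syntactically.
noncomputable def ind (P : Prop) : ℝ := if P then 1 else 0

noncomputable def payoff (x : ℤ) : ℝ := ind (x = 1) - ind (x = -1)

section FiniteSums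

variable {Ω : Type*} [Fintype Ω] (p : Ω → ℝ)

theorem Pr_eq_sum_mul_ind (E : Ω → Prop) : Pr p E = ∑ ω, p ω * ind (E ω) := by
  simp only [Pr, ind, mul_ite, mul_one, mul_zero]

theorem V_eq_sum_mul_payoff (X : Ω → ℤ) : V p X = ∑ ω, p ω * payoff (X ω) := by
  simp only [V, Pr_eq_sum_mul_ind, payoff, mul_sub, Finset.sum_sub_distrib]

end FiniteSums

theorem two_mul_payoff_sign_add_sub {a b : ℤ}
    (ha : a = -1 ∨ a = 0 ∨ a = 1) (hb : b = -1 ∨ b = 0 ∨ b = 1) :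
    2 * payoff (a + b).sign - (payoff a + payoff b) =
      (ind (a = 0 ∧ b = 1) + ind (b = 0 ∧ a = 1)) -
        (ind (a = 0 ∧ b = -1) + ind (b = 0 ∧ a = -1)) := by
  rcases ha with rfl | rfl | rfl <;> rcases hb with rfl | rfl | rfl <;>
    norm_num [payoff, ind, Int.sign_eq_one_of_pos]

theorem stmt_15_general {Ω : Type*} [Fintype Ω] (p : Ω → ℝ)
    (h₁ h₂ : Ω → ℤ)
    (hr₁ : ∀ ω, h₁ ω = -1 ∨ h₁ ω = 0 ∨ h₁ ω = 1)
    (hr₂ : ∀ ω, h₂ ω = -1 ∨ h₂ ω = 0 ∨ h₂ ω = 1) :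
    V p (fun ω => (h₁ ω + h₂ ω).sign) ≥ (V p h₁ + V p h₂) / 2 ↔
      Pr p (fun ω => h₁ ω = 0 ∧ h₂ ω = 1) + Pr p (fun ω => h₂ ω = 0 ∧ h₁ ω = 1) ≥
        Pr p (fun ω => h₁ ω = 0 ∧ h₂ ω = -1) + Pr p (fun ω => h₂ ω = 0 ∧ h₁ ω = -1) := by
  have gap : 2 * V p (fun ω => (h₁ ω + h₂ ω).sign) - (V p h₁ + V p h₂) =
      (Pr p (fun ω => h₁ ω = 0 ∧ h₂ ω = 1) + Pr p (fun ω => h₂ ω = 0 ∧ h₁ ω = 1)) -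
        (Pr p (fun ω => h₁ ω = 0 ∧ h₂ ω = -1) + Pr p (fun ω => h₂ ω = 0 ∧ h₁ ω = -1)) := by
    simp only [V_eq_sum_mul_payoff, Pr_eq_sum_mul_ind, Finset.mul_sum, ← Finset.sum_add_distrib,
      ← Finset.sum_sub_distrib]
    refine Finset.sum_congr rfl fun ω _ => ?_
    linear_combination p ω * two_mul_payoff_sign_add_sub (hr₁ ω) (hr₂ ω)
  constructor <;> intro h <;> linarith

theorem stmt_15 {Ω : Type*} [Fintype Ω] (p : Ω → ℝ)
    (hp : ∀ ω, 0 ≤ p ω) (hsum : ∑ ω, p ω = 1)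
    (h₁ h₂ : Ω → ℤ)
    (hr₁ : ∀ ω, h₁ ω = -1 ∨ h₁ ω = 0 ∨ h₁ ω = 1)
    (hr₂ : ∀ ω, h₂ ω = -1 ∨ h₂ ω = 0 ∨ h₂ ω = 1) :
    V p (fun ω => (h₁ ω + h₂ ω).sign) ≥ (V p h₁ + V p h₂) / 2 ↔
      Pr p (fun ω => h₁ ω = 0 ∧ h₂ ω = 1) + Pr p (fun ω => h₂ ω = 0 ∧ h₁ ω = 1) ≥
        Pr p (fun ω => h₁ ω = 0 ∧ h₂ ω = -1) + Pr p (fun ω => h₂ ω = 0 ∧ h₁ ω = -1) :=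
  stmt_15_general p h₁ h₂ hr₁ hr₂
end

section
/- Let a₁,b₁,c₁,a₂,b₂,c₂ be nonnegative reals with a₁+b₁+c₁=1, a₂+b₂+c₂=1, and suppose b₁ > 0, a₂ > c₂, and a₁ ≥ c₁ (or symmetrically b₂ > 0, a₁ > c₁, a₂ ≥ c₂). Then (a₁a₂ + a₁b₂ + a₂b₁) − (c₁c₂ + c₁b₂ + c₂b₁) > ((a₁−c₁)+(a₂−c₂))/2. -/
/-!
Eliminating the neutral probabilities `bᵢ = 1 - aᵢ - cᵢ` shows that the synergy is
`(b₁ (a₂ - c₂) + b₂ (a₁ - c₁)) / 2`: each agent's neutrality lets the other agent's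
advantage `aⱼ - cⱼ` decide. Under the hypotheses one summand is positive and the other nonnegative.
-/

theorem two_mul_collective_payoff_sub_eq {R : Type*} [CommRing R] {a₁ b₁ c₁ a₂ b₂ c₂ : R}
    (h1 : a₁ + b₁ + c₁ = 1) (h2 : a₂ + b₂ + c₂ = 1) :
    2 * ((a₁ * a₂ + a₁ * b₂ + a₂ * b₁) - (c₁ * c₂ + c₁ * b₂ + c₂ * b₁)) -
        ((a₁ - c₁) + (a₂ - c₂)) =
      b₁ * (a₂ - c₂) + b₂ * (a₁ - c₁) := by
  linear_combination (a₂ - c₂) * h1 + (a₁ - c₁) * h2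

theorem stmt_17_general (a₁ b₁ c₁ a₂ b₂ c₂ : ℝ)
    (hb₁ : 0 ≤ b₁) (hb₂ : 0 ≤ b₂)
    (h1 : a₁ + b₁ + c₁ = 1) (h2 : a₂ + b₂ + c₂ = 1)
    (hyp : (b₁ > 0 ∧ a₂ > c₂ ∧ a₁ ≥ c₁) ∨ (b₂ > 0 ∧ a₁ > c₁ ∧ a₂ ≥ c₂)) :
    (a₁ * a₂ + a₁ * b₂ + a₂ * b₁) - (c₁ * c₂ + c₁ * b₂ + c₂ * b₁) >
      ((a₁ - c₁) + (a₂ - c₂)) / 2 := by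
  have synergy_pos : 0 < b₁ * (a₂ - c₂) + b₂ * (a₁ - c₁) := by
    rcases hyp with ⟨hb₁_pos, hx₂, hx₁⟩ | ⟨hb₂_pos, hx₁, hx₂⟩
    · exact add_pos_of_pos_of_nonneg (mul_pos hb₁_pos (sub_pos.2 hx₂))
        (mul_nonneg hb₂ (sub_nonneg.2 hx₁))
    · exact add_pos_of_nonneg_of_pos (mul_nonneg hb₁ (sub_nonneg.2 hx₂))
        (mul_pos hb₂_pos (sub_pos.2 hx₁))
  linarith [two_mul_collective_payoff_sub_eq h1 h2]

theorem stmt_17 (a₁ b₁ c₁ a₂ b₂ c₂ : ℝ)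
    (ha₁ : 0 ≤ a₁) (hb₁ : 0 ≤ b₁) (hc₁ : 0 ≤ c₁)
    (ha₂ : 0 ≤ a₂) (hb₂ : 0 ≤ b₂) (hc₂ : 0 ≤ c₂)
    (h1 : a₁ + b₁ + c₁ = 1) (h2 : a₂ + b₂ + c₂ = 1)
    (hyp : (b₁ > 0 ∧ a₂ > c₂ ∧ a₁ ≥ c₁) ∨ (b₂ > 0 ∧ a₁ > c₁ ∧ a₂ ≥ c₂)) :
    (a₁ * a₂ + a₁ * b₂ + a₂ * b₁) - (c₁ * c₂ + c₁ * b₂ + c₂ * b₁) >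
      ((a₁ - c₁) + (a₂ - c₂)) / 2 :=
  stmt_17_general a₁ b₁ c₁ a₂ b₂ c₂ hb₁ hb₂ h1 h2 hyp
end

section
/- Let a₁,b₁,c₁,a₂,b₂,c₂ be nonnegative reals with a₁+b₁+c₁=1 and a₂+b₂+c₂=1, and suppose the collective decision has positive synergy: (a₁a₂ + a₁b₂ + a₂b₁) − (c₁c₂ + c₁b₂ + c₂b₁) > ((a₁−c₁)+(a₂−c₂))/2. Then b₁ > 0 or b₂ > 0. -/
/-- `a₁a₂ - c₁c₂ = ((a₁ - c₁)(a₂ + c₂) + (a₁ + c₁)(a₂ - c₂)) / 2` holds identically. -/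
theorem mul_sub_mul_eq_average_of_add_eq_one {a₁ c₁ a₂ c₂ : ℝ}
    (h₁ : a₁ + c₁ = 1) (h₂ : a₂ + c₂ = 1) :
    a₁ * a₂ - c₁ * c₂ = ((a₁ - c₁) + (a₂ - c₂)) / 2 := by
  linear_combination ((a₁ - c₁) * h₂ + (a₂ - c₂) * h₁) / 2

theorem stmt_18_general (a₁ b₁ c₁ a₂ b₂ c₂ : ℝ)
    (hb₁ : 0 ≤ b₁)
    (hb₂ : 0 ≤ b₂)
    (h1 : a₁ + b₁ + c₁ = 1) (h2 : a₂ + b₂ + c₂ = 1)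
    (hsyn : (a₁ * a₂ + a₁ * b₂ + a₂ * b₁) - (c₁ * c₂ + c₁ * b₂ + c₂ * b₁) >
      ((a₁ - c₁) + (a₂ - c₂)) / 2) :
    b₁ > 0 ∨ b₂ > 0 := by
  by_contra! h
  obtain rfl : b₁ = 0 := le_antisymm h.1 hb₁
  obtain rfl : b₂ = 0 := le_antisymm h.2 hb₂
  have hno_synergy : a₁ * a₂ - c₁ * c₂ = ((a₁ - c₁) + (a₂ - c₂)) / 2 :=
    mul_sub_mul_eq_average_of_add_eq_one (by simpa using h1) (by simpa using h2)
  simp only [mul_zero, add_zero] at hsyn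
  exact hsyn.ne' hno_synergy

theorem stmt_18 (a₁ b₁ c₁ a₂ b₂ c₂ : ℝ)
    (ha₁ : 0 ≤ a₁) (hb₁ : 0 ≤ b₁) (hc₁ : 0 ≤ c₁)
    (ha₂ : 0 ≤ a₂) (hb₂ : 0 ≤ b₂) (hc₂ : 0 ≤ c₂)
    (h1 : a₁ + b₁ + c₁ = 1) (h2 : a₂ + b₂ + c₂ = 1)
    (hsyn : (a₁ * a₂ + a₁ * b₂ + a₂ * b₁) - (c₁ * c₂ + c₁ * b₂ + c₂ * b₁) >
      ((a₁ - c₁) + (a₂ - c₂)) / 2) :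
    b₁ > 0 ∨ b₂ > 0 :=
  stmt_18_general a₁ b₁ c₁ a₂ b₂ c₂ hb₁ hb₂ h1 h2 hsyn
end
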